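/- arXiv:0808.2766 — 3 statements merged into one kernel-verified Lean document; each statement's English description precedes it below -/
import Mathlib

section
/- Let A be a countable subset of ℂ, and for each α ∈ A and each natural number s ≥ 0 let E_{α,s} be a dense subset of ℂ. Then the set of entire functions f : ℂ → ℂ which are not polynomials and satisfy f^(s)(α) ∈ E_{α,s} for every α ∈ A and every s ≥ 0 is uncountable. -/
/-!
Fix `β ∉ A` and suppose the admissible functions are `g₀, g₁, …`. Enumerate the conditions
`(α, s)`, `α ∈ A ∪ {β}`, as `(q k, m k)` and look for `f = ∑ cₖ Pₖ`, where the polynomial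
`Pₖ` vanishes to order exactly `m k` at `q k` and to order `> m j` at every earlier node
`q j`. Then `f^(m k)(q k)` depends only on `c₀, …, cₖ` and is affine in `cₖ` with nonzero
slope, so `cₖ` can be chosen both small enough for locally uniform convergence and such that
`f^(m k)(q k)` lies in the prescribed dense set. Prescribing `f^(s)(β) ∉ {0, gₛ^(s)(β)}`
makes `f` admissible, transcendental and different from every `gₛ`.
-/

open Polynomial Filter Metric Set

theorem exists_seq_forall_of_forall_exists {α : Type*}
    {P : ∀ k : ℕ, (Fin k → α) → α → Prop} (h : ∀ k prev, ∃ x, P k prev x) :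
    ∃ c : ℕ → α, ∀ k, P k (fun j => c j) (c k) := by
  choose next hnext using h
  let c : ℕ → α := fun n => Nat.strongRec (fun k ih => next k fun j => ih j j.2) n
  refine ⟨c, fun k => ?_⟩
  have hc : c k = next k fun j => c j := Nat.strongRec_eq ..
  exact hc ▸ hnext _ _

theorem Dense.exists_norm_le_add_mul_mem {𝕜 : Type*} [NormedField 𝕜] {D : Set 𝕜}
    (hD : Dense D) (v : 𝕜) {d : 𝕜} (hd : d ≠ 0) {ε : ℝ} (hε : 0 < ε) :
    ∃ c : 𝕜, ‖c‖ ≤ ε ∧ v + c * d ∈ D := by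
  let affine : 𝕜 ≃ₜ 𝕜 := (Homeomorph.mulRight₀ d hd).trans (Homeomorph.addLeft v)
  obtain ⟨c, hcD, hc⟩ := (hD.preimage affine.isOpenMap).exists_dist_lt 0 hε
  exact ⟨c, by simpa [dist_comm] using hc.le, hcD⟩

theorem Polynomial.iteratedDeriv_eval {𝕜 : Type*} [NontriviallyNormedField 𝕜] (p : 𝕜[X])
    (s : ℕ) : iteratedDeriv s (fun z => p.eval z) = fun z => (derivative^[s] p).eval z := by
  induction s with
  | zero => simp
  | succ s ih =>
    ext z
    rw [iteratedDeriv_succ, ih, Function.iterate_succ_apply', Polynomial.deriv]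

theorem Polynomial.eval_iterate_derivative_rootMultiplicity_ne_zero {R : Type*} [CommRing R]
    [IsDomain R] [CharZero R] {p : R[X]} (hp : p ≠ 0) (t : R) :
    (derivative^[p.rootMultiplicity t] p).eval t ≠ 0 := fun h =>
  (lt_irrefl _) <| (lt_rootMultiplicity_iff_isRoot_iterate_derivative hp).2 fun _ hi =>
    hi.lt_or_eq.elim isRoot_iterate_derivative_of_lt_rootMultiplicity (· ▸ h)

theorem ne_polynomial_eval_of_iteratedDeriv_ne_zero {𝕜 : Type*} [NontriviallyNormedField 𝕜]
    {f : 𝕜 → 𝕜} {β : 𝕜} (hf : ∀ s, iteratedDeriv s f β ≠ 0) (p : 𝕜[X]) :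
    f ≠ fun z => p.eval z := by
  rintro rfl
  apply hf (p.natDegree + 1)
  rw [p.iteratedDeriv_eval, iterate_derivative_eq_zero (Nat.lt_succ_self _)]
  exact eval_zero

theorem TendstoLocallyUniformly.iteratedDeriv_of_differentiable {ι : Type*} {φ : Filter ι}
    {F : ι → ℂ → ℂ} {f : ℂ → ℂ} (hf : TendstoLocallyUniformly F f φ)
    (hF : ∀ᶠ n in φ, Differentiable ℂ (F n)) (s : ℕ) :
    TendstoLocallyUniformly (fun n => iteratedDeriv s (F n)) (iteratedDeriv s f) φ := by
  induction s with
  | zero => simpa using hf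
  | succ s ih =>
    rw [← tendstoLocallyUniformlyOn_univ] at ih ⊢
    simp only [iteratedDeriv_succ]
    refine ih.deriv ?_ isOpen_univ
    filter_upwards [hF] with n hn
    exact (hn.contDiff.differentiable_iteratedDeriv s (WithTop.coe_lt_top _)).differentiableOn

theorem hasSum_iteratedDeriv_of_tendstoLocallyUniformly {ι : Type*} {g : ι → ℂ → ℂ}
    {f : ℂ → ℂ} (hg : ∀ i, Differentiable ℂ (g i))
    (hf : TendstoLocallyUniformly (fun t z => ∑ i ∈ t, g i z) f atTop) (s : ℕ) (z : ℂ) :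
    HasSum (fun i => iteratedDeriv s (g i) z) (iteratedDeriv s f z) := by
  have hsum := (hf.iteratedDeriv_of_differentiable (Eventually.of_forall fun t =>
    Differentiable.fun_sum fun i _ => hg i) s).tendstoLocallyUniformlyOn.tendsto_at (mem_univ z)
  refine hsum.congr fun t => ?_
  exact iteratedDeriv_fun_sum fun i _ => (hg i).contDiff.contDiffAt

theorem exists_pos_tendstoLocallyUniformly_tsum_mul {g : ℕ → ℂ → ℂ}
    (hg : ∀ k, Continuous (g k)) :
    ∃ ε : ℕ → ℝ, (∀ k, 0 < ε k) ∧ ∀ c : ℕ → ℂ, (∀ k, ‖c k‖ ≤ ε k) →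
      TendstoLocallyUniformly (fun t z => ∑ k ∈ t, c k * g k z)
        (fun z => ∑' k, c k * g k z) atTop := by
  choose M hM using fun k : ℕ =>
    (isCompact_closedBall (0 : ℂ) k).exists_bound_of_continuousOn (hg k).continuousOn
  have hM0 : ∀ k, 0 ≤ M k := fun k => (norm_nonneg _).trans (hM k 0 (by simp))
  refine ⟨fun k => (1 / 2) ^ k / (M k + 1), fun k => by have := hM0 k; positivity,
    fun c hc => ?_⟩
  rw [← tendstoLocallyUniformlyOn_univ,
    tendstoLocallyUniformlyOn_iff_forall_isCompact isOpen_univ]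
  intro K _ hK
  obtain ⟨R, hKR⟩ := hK.isBounded.subset_closedBall 0
  refine tendstoUniformlyOn_tsum_of_cofinite_eventually (u := fun k => (1 / 2 : ℝ) ^ k)
    (summable_geometric_of_lt_one (by norm_num) (by norm_num)) ?_
  rw [Nat.cofinite_eq_atTop]
  filter_upwards [eventually_ge_atTop ⌈R⌉₊] with k hk z hz
  have hzk : z ∈ closedBall (0 : ℂ) k := closedBall_subset_closedBall
    ((Nat.le_ceil R).trans (by exact_mod_cast hk)) (hKR hz)
  calc ‖c k * g k z‖ ≤ (1 / 2) ^ k / (M k + 1) * M k := by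
        rw [norm_mul]
        exact mul_le_mul (hc k) (hM k z hzk) (norm_nonneg _) (by have := hM0 k; positivity)
    _ ≤ (1 / 2) ^ k := by
        rw [div_mul_eq_mul_div, div_le_iff₀ (by linarith [hM0 k])]
        nlinarith [hM0 k, pow_pos (by norm_num : (0 : ℝ) < 1 / 2) k]

section HermiteBasis

variable {K : Type*} [Field K] [DecidableEq K] (q : ℕ → K) (m : ℕ → ℕ)

noncomputable def hermiteBasis (k : ℕ) : K[X] :=
  (∏ j ∈ (Finset.range k).filter (q · ≠ q k), (X - C (q j)) ^ (m j + 1)) *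
    (X - C (q k)) ^ m k

theorem hermiteBasis_ne_zero (k : ℕ) : hermiteBasis q m k ≠ 0 :=
  mul_ne_zero (Finset.prod_ne_zero_iff.2 fun _ _ => pow_ne_zero _ (X_sub_C_ne_zero _))
    (pow_ne_zero _ (X_sub_C_ne_zero _))

theorem rootMultiplicity_hermiteBasis (k : ℕ) :
    (hermiteBasis q m k).rootMultiplicity (q k) = m k := by
  have hprod : ¬ (∏ j ∈ (Finset.range k).filter (q · ≠ q k),
      (X - C (q j)) ^ (m j + 1)).IsRoot (q k) := by
    simp only [IsRoot, eval_prod, eval_pow, eval_sub, eval_X, eval_C]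
    exact Finset.prod_ne_zero_iff.2 fun j hj =>
      pow_ne_zero _ (sub_ne_zero.2 (Finset.mem_filter.1 hj).2.symm)
  rw [hermiteBasis, rootMultiplicity_mul_X_sub_C_pow (Finset.prod_ne_zero_iff.2 fun _ _ =>
    pow_ne_zero _ (X_sub_C_ne_zero _)), rootMultiplicity_eq_zero hprod, zero_add]

theorem eval_iterate_derivative_hermiteBasis_self_ne_zero [CharZero K] (k : ℕ) :
    (derivative^[m k] (hermiteBasis q m k)).eval (q k) ≠ 0 := by
  simpa only [rootMultiplicity_hermiteBasis] using
    eval_iterate_derivative_rootMultiplicity_ne_zero (hermiteBasis_ne_zero q m k) (q k)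

theorem eval_iterate_derivative_hermiteBasis_of_lt
    (hm : ∀ j k, j < k → q j = q k → m j < m k) {l k : ℕ} (hlk : l < k) :
    (derivative^[m l] (hermiteBasis q m k)).eval (q l) = 0 := by
  have hdvd : (X - C (q l)) ^ (m l + 1) ∣ hermiteBasis q m k := by
    by_cases hq : q l = q k
    · exact hq ▸ (pow_dvd_pow _ (hm l k hlk hq)).mul_left _
    · exact (Finset.dvd_prod_of_mem _
        (Finset.mem_filter.2 ⟨Finset.mem_range.2 hlk, hq⟩)).mul_right _
  exact isRoot_iterate_derivative_of_lt_rootMultiplicity <|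
    (le_rootMultiplicity_iff (hermiteBasis_ne_zero q m k)).2 hdvd

end HermiteBasis

theorem exists_differentiable_iteratedDeriv_mem_of_seq (q : ℕ → ℂ) (m : ℕ → ℕ)
    (hm : ∀ j k, j < k → q j = q k → m j < m k) {D : ℕ → Set ℂ} (hD : ∀ k, Dense (D k)) :
    ∃ f : ℂ → ℂ, Differentiable ℂ f ∧ ∀ k, iteratedDeriv (m k) f (q k) ∈ D k := by
  let g : ℕ → ℂ → ℂ := fun k z => (hermiteBasis q m k).eval z
  let a : ℕ → ℕ → ℂ := fun j k => iteratedDeriv (m k) (g j) (q k)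
  have ha_of_lt : ∀ j k, k < j → a j k = 0 := fun j k hkj => by
    simp only [a, g, iteratedDeriv_eval,
      eval_iterate_derivative_hermiteBasis_of_lt q m hm hkj]
  have ha_self : ∀ k, a k k ≠ 0 := fun k => by
    simpa only [a, g, iteratedDeriv_eval] using
      eval_iterate_derivative_hermiteBasis_self_ne_zero q m k
  obtain ⟨ε, hε, hconv⟩ :=
    exists_pos_tendstoLocallyUniformly_tsum_mul fun k => (hermiteBasis q m k).continuous
  obtain ⟨c, hc⟩ := exists_seq_forall_of_forall_exists
    (P := fun k prev x => ‖x‖ ≤ ε k ∧ ∑ j, prev j * a j k + x * a k k ∈ D k)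
    fun k prev => (hD k).exists_norm_le_add_mul_mem _ (ha_self k) (hε k)
  have hf := hconv c fun k => (hc k).1
  refine ⟨fun z => ∑' k, c k * g k z, ?_, fun k => ?_⟩
  · rw [← differentiableOn_univ]
    refine (tendstoLocallyUniformlyOn_univ.2 hf).differentiableOn
      (Eventually.of_forall fun t => ?_) isOpen_univ
    exact (Differentiable.fun_sum fun k _ =>
      (hermiteBasis q m k).differentiable.const_mul _).differentiableOn
  · have hsum := hasSum_iteratedDeriv_of_tendstoLocallyUniformly
      (fun k => (hermiteBasis q m k).differentiable.const_mul (c k)) hf (m k) (q k)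
    simp only [iteratedDeriv_const_mul_field] at hsum
    have hfin : HasSum (fun j => c j * a j k) (∑ j ∈ Finset.range (k + 1), c j * a j k) :=
      hasSum_sum_of_ne_finset_zero fun j hj => by
        rw [ha_of_lt j k (by simpa using hj), mul_zero]
    rw [hsum.unique hfin, Finset.sum_range_succ, ← Fin.sum_univ_eq_sum_range]
    exact (hc k).2

theorem Set.Countable.exists_differentiable_iteratedDeriv_mem {A : Set ℂ} (hA : A.Countable)
    {E : ℂ → ℕ → Set ℂ} (hE : ∀ α ∈ A, ∀ s, Dense (E α s)) :
    ∃ f : ℂ → ℂ, Differentiable ℂ f ∧ ∀ α ∈ A, ∀ s, iteratedDeriv s f α ∈ E α s := by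
  obtain ⟨u, hu⟩ := Set.countable_iff_exists_subset_range.1 hA
  let q : ℕ → ℂ := fun k => u k.unpair.1
  -- `m k` counts the earlier occurrences of `q k`, so every order is reached at every node
  let m : ℕ → ℕ := fun k => Nat.count (q · = q k) k
  have hm : ∀ j k, j < k → q j = q k → m j < m k := fun j k hjk hq => by
    simpa only [m, hq] using Nat.count_strict_mono hq hjk
  have hfiber : ∀ i, {k | q k = u i}.Infinite := fun i =>
    Set.infinite_of_injective_forall_mem
      (fun _ _ h => (Nat.pair_eq_pair.1 h).2 : (Nat.pair i).Injective) fun n => by simp [q]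
  have hsurj : ∀ α ∈ A, ∀ s, ∃ k, q k = α ∧ m k = s := by
    intro α hα s
    obtain ⟨i, rfl⟩ := hu hα
    have hnth := Nat.nth_mem_of_infinite (hfiber i) s
    exact ⟨_, hnth, by simpa only [m, hnth] using Nat.count_nth_of_infinite (hfiber i) s⟩
  obtain ⟨f, hf, hfD⟩ := exists_differentiable_iteratedDeriv_mem_of_seq q m hm
    (D := fun k => {z | q k ∈ A → z ∈ E (q k) (m k)}) fun k => by
      by_cases hk : q k ∈ A
      · simpa [hk] using hE _ hk _
      · simp [hk]
  refine ⟨f, hf, fun α hα s => ?_⟩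
  obtain ⟨k, rfl, rfl⟩ := hsurj α hα s
  exact hfD k hα

theorem stmt_1 (A : Set ℂ) (hA : A.Countable)
    (E : ℂ → ℕ → Set ℂ) (hE : ∀ α ∈ A, ∀ s : ℕ, Dense (E α s)) :
    ¬ Set.Countable {f : ℂ → ℂ | Differentiable ℂ f ∧
        (∀ p : Polynomial ℂ, f ≠ fun z => p.eval z) ∧
        ∀ α ∈ A, ∀ s : ℕ, iteratedDeriv s f α ∈ E α s} := by
  intro hS
  obtain ⟨g, hg⟩ := Set.countable_iff_exists_subset_range.1 hS
  obtain ⟨β, hβ⟩ := (hA.dense_compl ℂ).nonempty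
  let E' : ℂ → ℕ → Set ℂ := fun α s =>
    if α = β then {0, iteratedDeriv s (g s) β}ᶜ else E α s
  obtain ⟨f, hf, hfE⟩ := (hA.insert β).exists_differentiable_iteratedDeriv_mem (E := E')
    fun α hα s => by
      by_cases hαβ : α = β
      · simpa [E', hαβ] using
          (Set.toFinite {0, iteratedDeriv s (g s) β}).countable.dense_compl ℂ
      · simpa [E', hαβ] using hE α (hα.resolve_left hαβ) s
  have hfβ : ∀ s, iteratedDeriv s f β ∉ ({0, iteratedDeriv s (g s) β} : Set ℂ) :=
    fun s => by simpa [E'] using hfE β (mem_insert _ _) s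
  obtain ⟨n, rfl⟩ := hg ⟨hf, ne_polynomial_eval_of_iteratedDeriv_ne_zero (β := β)
    fun s h => hfβ s (h ▸ mem_insert _ _),
    fun α hα s => by
      simpa [E', ne_of_mem_of_not_mem hα hβ] using hfE α (mem_insert_of_mem _ hα) s⟩
  exact hfβ n (by simp)
end

section
/- Let (α_j)_{j≥1} be a sequence of pairwise distinct complex numbers. For each integer n ≥ 1 write n = m_n(m_n+1)/2 + j_n where m_n ≥ 0 and 1 ≤ j_n ≤ m_n + 1, and set i_n = m_n + 1 − j_n. Define polynomials by P_0(z) = 1 and P_n(z) = (z − α_{j_n}) P_{n−1}(z) for n ≥ 1. Then for every n ≥ 1 and every l ≥ n, α_{j_n} is a root of P_l of multiplicity at least i_n + 1. -/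
/-- The sequence of polynomials `P_0 = 1`, `P_n = (X - α_{j_n}) * P_{n-1}`. -/
noncomputable def Pseq (α : ℕ → ℂ) (j : ℕ → ℕ) : ℕ → Polynomial ℂ
  | 0 => 1
  | n + 1 => (Polynomial.X - Polynomial.C (α (j (n + 1)))) * Pseq α j n

private def Tri (k : ℕ) : ℕ := k * (k + 1) / 2

private lemma Tri_eq_sum (k : ℕ) : Tri k = ∑ i ∈ Finset.range (k + 1), i := by
  rw [Finset.sum_range_id]
  simp [Tri, Nat.mul_comm]

private lemma Tri_succ (k : ℕ) : Tri (k + 1) = Tri k + (k + 1) := by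
  rw [Tri_eq_sum, Tri_eq_sum, Finset.sum_range_succ]

private lemma Tri_mono : Monotone Tri :=
  monotone_nat_of_le_succ fun k => by rw [Tri_succ]; omega

private lemma Tri_unique {a b a' b' : ℕ} (h1 : 1 ≤ b) (h2 : b ≤ a + 1)
    (h1' : 1 ≤ b') (h2' : b' ≤ a' + 1) (h : Tri a + b = Tri a' + b') :
    a = a' ∧ b = b' := by
  have key : ∀ x y : ℕ, x < y → Tri x + (x + 1) ≤ Tri y := fun x y hxy => by
    calc Tri x + (x + 1) = Tri (x + 1) := (Tri_succ x).symm
    _ ≤ Tri y := Tri_mono hxy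
  rcases lt_trichotomy a a' with h3 | h3 | h3
  · have := key a a' h3; omega
  · subst h3; omega
  · have := key a' a h3; omega

private lemma Pseq_monic (α : ℕ → ℂ) (j : ℕ → ℕ) : ∀ n, (Pseq α j n).Monic
  | 0 => Polynomial.monic_one
  | n + 1 => (Polynomial.monic_X_sub_C _).mul (Pseq_monic α j n)

private lemma Pseq_ne_zero (α : ℕ → ℂ) (j : ℕ → ℕ) (n : ℕ) : Pseq α j n ≠ 0 :=
  (Pseq_monic α j n).ne_zero

private lemma mult_succ (α : ℕ → ℂ) (j : ℕ → ℕ) (x : ℂ) (n : ℕ) :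
    Polynomial.rootMultiplicity x (Pseq α j (n + 1)) =
      (if x = α (j (n + 1)) then 1 else 0) + Polynomial.rootMultiplicity x (Pseq α j n) := by
  have hne : (Polynomial.X - Polynomial.C (α (j (n + 1)))) * Pseq α j n ≠ 0 :=
    mul_ne_zero (Polynomial.X_sub_C_ne_zero _) (Pseq_ne_zero α j n)
  show Polynomial.rootMultiplicity x
      ((Polynomial.X - Polynomial.C (α (j (n + 1)))) * Pseq α j n) = _
  rw [Polynomial.rootMultiplicity_mul hne, Polynomial.rootMultiplicity_X_sub_C]

private lemma mult_mono (α : ℕ → ℂ) (j : ℕ → ℕ) (x : ℂ) {n l : ℕ} (h : n ≤ l) :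
    Polynomial.rootMultiplicity x (Pseq α j n) ≤ Polynomial.rootMultiplicity x (Pseq α j l) := by
  induction l, h using Nat.le_induction with
  | base => exact le_refl _
  | succ l hl ih =>
    rw [mult_succ]
    omega

theorem stmt_7 (α : ℕ → ℂ)
    (hα : ∀ ⦃k l : ℕ⦄, 1 ≤ k → 1 ≤ l → α k = α l → k = l)
    (m j : ℕ → ℕ)
    (hmj : ∀ n : ℕ, 1 ≤ n → 1 ≤ j n ∧ j n ≤ m n + 1 ∧ n = m n * (m n + 1) / 2 + j n) :
    ∀ n l : ℕ, 1 ≤ n → n ≤ l →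
      (m n + 1 - j n) + 1 ≤ Polynomial.rootMultiplicity (α (j n)) (Pseq α j l) := by
  have hmj' : ∀ n : ℕ, 1 ≤ n → 1 ≤ j n ∧ j n ≤ m n + 1 ∧ n = Tri (m n) + j n := hmj
  have main : ∀ n : ℕ, 1 ≤ n →
      (m n + 1 - j n) + 1 ≤ Polynomial.rootMultiplicity (α (j n)) (Pseq α j n) := by
    intro n
    induction n using Nat.strong_induction_on with
    | _ n ih =>
      intro hn
      obtain ⟨hj1, hj2, hdec⟩ := hmj' n hn
      obtain ⟨n', rfl⟩ : ∃ n', n = n' + 1 := ⟨n - 1, by omega⟩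
      rw [mult_succ, if_pos rfl]
      rcases Nat.lt_or_ge (j (n' + 1)) (m (n' + 1) + 1) with hlt | hge
      · -- j n ≤ m n, previous occurrence at p = Tri (m n - 1) + j n
        set N := n' + 1
        have hm1 : 1 ≤ m N := by omega
        set p := Tri (m N - 1) + j N with hp
        have hTs : Tri (m N) = Tri (m N - 1) + m N := by
          have := Tri_succ (m N - 1)
          rw [show m N - 1 + 1 = m N by omega] at this
          omega
        have hpN : p + m N = N := by omega
        have hp1 : 1 ≤ p := by omega
        obtain ⟨hq1, hq2, hq3⟩ := hmj' p hp1
        have huniq : m p = m N - 1 ∧ j p = j N := by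
          refine Tri_unique hq1 hq2 hj1 (by omega) ?_
          omega
        have hlp : p ≤ n' := by omega
        have := ih p (by omega) hp1
        have hmono := mult_mono α j (α (j p)) hlp
        rw [huniq.2] at this hmono
        have hfin : m p + 1 - j N + 1 ≤ Polynomial.rootMultiplicity (α (j N)) (Pseq α j n') :=
          le_trans this hmono
        have hmp : m p + 1 - j N + 1 = m N + 1 - j N := by
          have h1 := huniq.1
          omega
        omega
      · -- j n = m n + 1, multiplicity ≥ 1 suffices
        have : m (n' + 1) + 1 - j (n' + 1) = 0 := by omega
        omega
  intro n l hn hl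
  exact le_trans (main n hn) (mult_mono α j _ hl)
end

section
/- For each countable subset Σ of ℂ and each dense subset T of ℂ, there exists an entire function f : ℂ → ℂ which is not a polynomial such that f^(s)(α) ∈ T for every α ∈ Σ and every natural number s ≥ 0. -/
/-!
Enumerate the conditions as pairs `(α k, σ k)`, meaning "`f^(σ k)(α k)` is prescribed", so that
at each point the orders appear in increasing order. The polynomial
`B_k = (X - α_k)^(σ_k) · ∏_{j < k, α_j ≠ α_k} (X - α_j)^(σ_j + 1)` then has vanishing `σ_j`-th
derivative at `α_j` for all `j < k`, and nonvanishing `σ_k`-th derivative at `α_k`. Hence in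
`f = ∑ c_k B_k` the value `f^(σ_k)(α_k)` depends only on `c_0, …, c_k`, and by density of `T` the
coefficient `c_k` can be chosen to put it in `T` while keeping `c_k B_k` below `2^(-k)` on the disc
of radius `k`. The series then converges locally uniformly, and so do its derivatives
(Weierstrass). Prescribing values in `T \ {0}` at all orders at `0` rules out polynomials.
-/

open Polynomial Finset Filter Metric

namespace Polynomial

theorem eval_iterate_derivative_eq_zero_of_pow_dvd {R : Type*} [CommRing R] {p : R[X]} {β : R}
    {m s : ℕ} (hdvd : (X - C β) ^ m ∣ p) (hs : s < m) : (derivative^[s] p).eval β = 0 := by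
  have := (dvd_pow_self (X - C β) (Nat.sub_ne_zero_of_lt hs)).trans
    (pow_sub_dvd_iterate_derivative_of_pow_dvd s hdvd)
  exact dvd_iff_isRoot.mp this

theorem eval_iterate_derivative_X_sub_C_pow_mul {R : Type*} [CommRing R] (β : R) (m : ℕ)
    (q : R[X]) : (derivative^[m] ((X - C β) ^ m * q)).eval β = m.factorial * q.eval β := by
  obtain ⟨r, hr⟩ := X_sub_C_dvd_sub_C_eval (a := β) (p := q)
  have hq : (X - C β) ^ m * q = C (q.eval β) * (X - C β) ^ m + (X - C β) ^ (m + 1) * r := by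
    linear_combination (X - C β) ^ m * hr
  rw [hq, iterate_map_add, eval_add, iterate_derivative_C_mul,
    iterate_derivative_X_sub_pow_self, eval_iterate_derivative_eq_zero_of_pow_dvd
      (dvd_mul_right _ r) m.lt_succ_self]
  simp [mul_comm]

theorem iteratedDeriv_eval_s10 {𝕜 : Type*} [NontriviallyNormedField 𝕜] (p : 𝕜[X]) (s : ℕ) :
    iteratedDeriv s (fun z => p.eval z) = fun z => (derivative^[s] p).eval z := by
  induction s with
  | zero => rfl
  | succ s ih =>
    ext z
    rw [iteratedDeriv_succ, ih, Function.iterate_succ_apply']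
    exact Polynomial.deriv _

theorem ne_eval_of_forall_iteratedDeriv_ne_zero {𝕜 : Type*} [NontriviallyNormedField 𝕜]
    {f : 𝕜 → 𝕜} {z : 𝕜} (h : ∀ s, iteratedDeriv s f z ≠ 0) (p : 𝕜[X]) :
    f ≠ fun x => p.eval x := by
  rintro rfl
  apply h (p.natDegree + 1)
  rw [iteratedDeriv_eval_s10, iterate_derivative_eq_zero p.natDegree.lt_succ_self]
  simp

end Polynomial

theorem TendstoLocallyUniformly.iteratedDeriv {ι : Type*} {φ : Filter ι} {G : ι → ℂ → ℂ}
    {f : ℂ → ℂ} (h : TendstoLocallyUniformly G f φ) (hG : ∀ i, Differentiable ℂ (G i)) (s : ℕ) :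
    TendstoLocallyUniformly (fun i => iteratedDeriv s (G i)) (iteratedDeriv s f) φ := by
  induction s with
  | zero => simpa only [iteratedDeriv_zero] using h
  | succ s ih =>
    have hdiff : ∀ i, DifferentiableOn ℂ (_root_.iteratedDeriv s (G i)) Set.univ := fun i =>
      ((hG i).contDiff.differentiable_iteratedDeriv s (WithTop.coe_lt_top _)).differentiableOn
    simp only [iteratedDeriv_succ, ← tendstoLocallyUniformlyOn_univ]
    exact (tendstoLocallyUniformlyOn_univ.mpr ih).deriv (.of_forall hdiff) isOpen_univ

theorem tendstoLocallyUniformly_sum_range_of_norm_le {V E : Type*} [SeminormedAddCommGroup V]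
    [NormedAddCommGroup E] [CompleteSpace E] {F : ℕ → V → E} {u : ℕ → ℝ} (hu : Summable u)
    (hF : ∀ (k : ℕ) x, ‖x‖ ≤ k → ‖F k x‖ ≤ u k) :
    TendstoLocallyUniformly (fun N x => ∑ k ∈ range N, F k x) (fun x => ∑' k, F k x) atTop := by
  refine tendstoLocallyUniformly_of_forall_exists_nhds fun x =>
    ⟨closedBall 0 (‖x‖ + 1), closedBall_mem_nhds_of_mem (by simp), ?_⟩
  refine tendstoUniformlyOn_tsum_nat_eventually hu ?_
  filter_upwards [eventually_ge_atTop ⌈‖x‖ + 1⌉₊] with k hk y hy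
  exact hF k y ((mem_closedBall_zero_iff.mp hy).trans (Nat.ceil_le.mp hk))

theorem Dense.exists_add_mul_mem_forall_norm_mul_le {T : Set ℂ} (hT : Dense T) (w : ℂ) {D : ℂ}
    (hD : D ≠ 0) {X : Type*} [TopologicalSpace X] {K : Set X} (hK : IsCompact K) {g : X → ℂ}
    (hg : ContinuousOn g K) {ε : ℝ} (hε : 0 < ε) :
    ∃ c : ℂ, w + c * D ∈ T ∧ ∀ x ∈ K, ‖c * g x‖ ≤ ε := by
  obtain ⟨M, hM⟩ := hK.exists_bound_of_continuousOn hg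
  have hM' : 0 < max M 1 := lt_max_of_lt_right one_pos
  obtain ⟨t, htT, ht⟩ := hT.exists_dist_lt w
    (mul_pos (div_pos hε hM') (norm_pos_iff.mpr hD))
  refine ⟨(t - w) / D, by rwa [div_mul_cancel₀ _ hD, add_sub_cancel], fun x hx => ?_⟩
  have hc : ‖(t - w) / D‖ ≤ ε / max M 1 := by
    rw [norm_div, div_le_iff₀ (norm_pos_iff.mpr hD), ← dist_eq_norm, dist_comm]
    exact ht.le
  calc ‖(t - w) / D * g x‖ = ‖(t - w) / D‖ * ‖g x‖ := norm_mul _ _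
    _ ≤ ε / max M 1 * max M 1 := by
        gcongr
        exact (hM x hx).trans (le_max_left _ _)
    _ = ε := div_mul_cancel₀ _ hM'.ne'

namespace EntireInterpolation

def Admissible {X : Type*} (α : ℕ → X) (σ : ℕ → ℕ) (k : ℕ) : Prop :=
  ∀ j < k, α j = α k → σ j < σ k

theorem exists_admissible_unpair {X : Type*} (a : ℕ → X) (u s : ℕ) :
    ∃ k, Admissible (fun k : ℕ => a k.unpair.1) (fun k : ℕ => k.unpair.2) k ∧
      a k.unpair.1 = a u ∧ k.unpair.2 = s := by
  classical
  have hP : ∃ k : ℕ, a k.unpair.1 = a u ∧ k.unpair.2 = s := ⟨Nat.pair u s, by simp⟩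
  obtain ⟨hKa, hKs⟩ := Nat.find_spec hP
  refine ⟨Nat.find hP, fun j hj hja => ?_, hKa, hKs⟩
  by_contra! hle
  -- `Nat.pair j.unpair.1 s ≤ j` would be an earlier index carrying the same condition.
  have hmono : Monotone (Nat.pair j.unpair.1) :=
    StrictMono.monotone fun _ _ => Nat.pair_lt_pair_right _
  have hlt : Nat.pair j.unpair.1 s < Nat.find hP := by
    calc Nat.pair j.unpair.1 s ≤ Nat.pair j.unpair.1 j.unpair.2 := hmono (hKs ▸ hle)
      _ = j := Nat.pair_unpair j
      _ < Nat.find hP := hj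
  exact Nat.find_min hP hlt (by simpa using hja.trans hKa)

variable (α : ℕ → ℂ) (σ : ℕ → ℕ) (T : Set ℂ)

noncomputable def basis (k : ℕ) : ℂ[X] :=
  (X - C (α k)) ^ σ k * ∏ j ∈ range k, if α j = α k then 1 else (X - C (α j)) ^ (σ j + 1)

variable {α σ T}

theorem eval_iterate_derivative_basis_of_lt {j k : ℕ} (hk : Admissible α σ k) (hjk : j < k) :
    (derivative^[σ j] (basis α σ k)).eval (α j) = 0 := by
  by_cases hjk' : α j = α k
  · rw [hjk']
    exact eval_iterate_derivative_eq_zero_of_pow_dvd (dvd_mul_right _ _) (hk j hjk hjk')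
  · refine eval_iterate_derivative_eq_zero_of_pow_dvd (Dvd.dvd.mul_left ?_ _) (σ j).lt_succ_self
    simpa [hjk'] using dvd_prod_of_mem
      (fun i => if α i = α k then 1 else (X - C (α i)) ^ (σ i + 1)) (mem_range.mpr hjk)

theorem eval_iterate_derivative_basis_self_ne_zero (k : ℕ) :
    (derivative^[σ k] (basis α σ k)).eval (α k) ≠ 0 := by
  rw [basis, eval_iterate_derivative_X_sub_C_pow_mul, eval_prod]
  refine mul_ne_zero (by exact_mod_cast (σ k).factorial_ne_zero) (prod_ne_zero_iff.mpr ?_)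
  intro j _
  split_ifs with h
  · simp
  · simpa [sub_eq_zero] using Ne.symm h

variable (α σ T)

def IsGoodCoeff (k : ℕ) (P : ℂ[X]) (c : ℂ) : Prop :=
  (derivative^[σ k] (P + C c * basis α σ k)).eval (α k) ∈ T ∧
    ∀ z ∈ closedBall (0 : ℂ) k, ‖c * (basis α σ k).eval z‖ ≤ 2⁻¹ ^ k

open Classical in
noncomputable def coeff (k : ℕ) (P : ℂ[X]) : ℂ :=
  if Admissible α σ k then Classical.epsilon (IsGoodCoeff α σ T k P) else 0

noncomputable def partialSum : ℕ → ℂ[X]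
  | 0 => 0
  | k + 1 => partialSum k + C (coeff α σ T k (partialSum k)) * basis α σ k

noncomputable def term (k : ℕ) : ℂ[X] :=
  C (coeff α σ T k (partialSum α σ T k)) * basis α σ k

noncomputable def interpolant (z : ℂ) : ℂ :=
  ∑' k, (term α σ T k).eval z

variable {α σ T}

theorem exists_isGoodCoeff (hT : Dense T) (k : ℕ) (P : ℂ[X]) : ∃ c, IsGoodCoeff α σ T k P c := by
  obtain ⟨c, hcT, hc⟩ := hT.exists_add_mul_mem_forall_norm_mul_le
    ((derivative^[σ k] P).eval (α k)) (eval_iterate_derivative_basis_self_ne_zero k)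
    (isCompact_closedBall 0 k) (basis α σ k).continuous.continuousOn
    (by positivity : (0 : ℝ) < 2⁻¹ ^ k)
  refine ⟨c, ?_, hc⟩
  simpa [iterate_map_add, iterate_derivative_C_mul] using hcT

theorem isGoodCoeff_coeff (hT : Dense T) {k : ℕ} (hk : Admissible α σ k) (P : ℂ[X]) :
    IsGoodCoeff α σ T k P (coeff α σ T k P) := by
  rw [coeff, if_pos hk]
  exact Classical.epsilon_spec (exists_isGoodCoeff hT k P)

theorem sum_range_term (N : ℕ) : ∑ k ∈ range N, term α σ T k = partialSum α σ T N := by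
  induction N with
  | zero => rfl
  | succ N ih => rw [sum_range_succ, ih, term, partialSum]

theorem norm_eval_term_le (hT : Dense T) (k : ℕ) {z : ℂ} (hz : ‖z‖ ≤ k) :
    ‖(term α σ T k).eval z‖ ≤ 2⁻¹ ^ k := by
  rw [term, eval_mul, eval_C]
  by_cases hk : Admissible α σ k
  · exact (isGoodCoeff_coeff hT hk _).2 z (mem_closedBall_zero_iff.mpr hz)
  · simp [coeff, hk]

theorem eval_iterate_derivative_term_of_lt {j k : ℕ} (hjk : j < k) :
    (derivative^[σ j] (term α σ T k)).eval (α j) = 0 := by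
  rw [term, iterate_derivative_C_mul, eval_mul, coeff]
  split_ifs with hk
  · rw [eval_iterate_derivative_basis_of_lt hk hjk, mul_zero]
  · simp

theorem tendstoLocallyUniformly_partialSum (hT : Dense T) :
    TendstoLocallyUniformly (fun N z => (partialSum α σ T N).eval z) (interpolant α σ T) atTop := by
  have := tendstoLocallyUniformly_sum_range_of_norm_le (F := fun k z => (term α σ T k).eval z)
    (summable_geometric_of_lt_one (by norm_num) (by norm_num)) fun k _ => norm_eval_term_le hT k
  simp only [← eval_finsetSum, sum_range_term] at this
  exact this

theorem differentiable_interpolant (hT : Dense T) : Differentiable ℂ (interpolant α σ T) := by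
  rw [← differentiableOn_univ]
  exact (tendstoLocallyUniformly_partialSum hT).tendstoLocallyUniformlyOn.differentiableOn
    (.of_forall fun N => (partialSum α σ T N).differentiable.differentiableOn) isOpen_univ

theorem eval_iterate_derivative_partialSum_of_lt {k N : ℕ} (hkN : k < N) :
    (derivative^[σ k] (partialSum α σ T N)).eval (α k) =
      (derivative^[σ k] (partialSum α σ T (k + 1))).eval (α k) := by
  induction N, hkN using Nat.le_induction with
  | base => rfl
  | succ N hkN ih =>
    rw [← sum_range_term, sum_range_succ, sum_range_term, iterate_map_add, eval_add, ih,
      eval_iterate_derivative_term_of_lt hkN, add_zero]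

theorem iteratedDeriv_interpolant_mem (hT : Dense T) {k : ℕ} (hk : Admissible α σ k) :
    iteratedDeriv (σ k) (interpolant α σ T) (α k) ∈ T := by
  have hlim := ((tendstoLocallyUniformly_partialSum hT).iteratedDeriv
    (fun N => (partialSum α σ T N).differentiable) (σ k)).tendstoLocallyUniformlyOn.tendsto_at
    (Set.mem_univ (α k))
  have hconst := tendsto_atTop_of_eventually_const (i₀ := k + 1) fun N (hN : k + 1 ≤ N) =>
    (congrFun (iteratedDeriv_eval_s10 (partialSum α σ T N) (σ k)) (α k)).trans
      (eval_iterate_derivative_partialSum_of_lt hN)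
  rw [tendsto_nhds_unique hlim hconst]
  exact (isGoodCoeff_coeff hT hk _).1

theorem exists_differentiable_forall_iteratedDeriv_mem (hT : Dense T) (a : ℕ → ℂ) :
    ∃ f : ℂ → ℂ, Differentiable ℂ f ∧ ∀ u s, iteratedDeriv s f (a u) ∈ T := by
  refine ⟨interpolant (fun k => a k.unpair.1) (fun k => k.unpair.2) T,
    differentiable_interpolant hT, fun u s => ?_⟩
  obtain ⟨k, hk, hku, hks⟩ := exists_admissible_unpair a u s
  simpa only [hku, hks] using iteratedDeriv_interpolant_mem hT hk

end EntireInterpolation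

theorem stmt_10 (S : Set ℂ) (hS : S.Countable) (T : Set ℂ) (hT : Dense T) :
    ∃ f : ℂ → ℂ, Differentiable ℂ f ∧
      (∀ p : Polynomial ℂ, f ≠ fun z => p.eval z) ∧
      ∀ α ∈ S, ∀ s : ℕ, iteratedDeriv s f α ∈ T := by
  obtain ⟨a, ha⟩ := (hS.insert 0).exists_eq_range (Set.insert_nonempty 0 S)
  obtain ⟨f, hf, hfT⟩ := EntireInterpolation.exists_differentiable_forall_iteratedDeriv_mem
    (hT.sdiff_singleton 0) a
  have hmem : ∀ α ∈ insert 0 S, ∀ s, iteratedDeriv s f α ∈ T \ {0} := by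
    rw [ha]
    rintro _ ⟨u, rfl⟩ s
    exact hfT u s
  exact ⟨f, hf, ne_eval_of_forall_iteratedDeriv_ne_zero fun s => (hmem 0 (.inl rfl) s).2,
    fun α hα s => (hmem α (.inr hα) s).1⟩
end
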